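/- For c > -1/8 and C₁ ∈ ℝ, the function u(x,y,t) = -1/4 - (√(3+24c)/4)·tanh((√(3+24c)/8)·(C₁ - x - y + ct)) satisfies u_t + u·u_x + 2u²·u_x - u_{xxx} - (1/3)·u_{xyy} = 0. -/

import Mathlib

/-!
Along the phase `ξ = C₁ - x - y + c t`, a traveling wave `u = F(ξ)` has `u_t = c F'`,
`u_x = -F'` and `u_xxx = u_xyy = -F'''`, so the equation reduces to the ODE
`(c - F - 2F²) F' + (4/3) F''' = 0`. For `F = a + b tanh(kξ)` and `T = tanh(kξ)` one has
`F' = bk(1 - T²)` and `F''' = -2bk³(1 - T²)(1 - 3T²)`; with `a = -1/4` the ODE divided by `F'`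
reads `c + 1/8 - 2b²T² - (8/3)k²(1 - 3T²) = 0`, which holds identically in `T` exactly when
`b² = 4k²` and `c + 1/8 = (8/3)k²`, i.e. `b = -s/4`, `k = s/8` with `s² = 3 + 24c`.
-/

open Real

theorem Real.hasDerivAt_tanh (x : ℝ) : HasDerivAt tanh (1 - tanh x ^ 2) x := by
  have h := (hasDerivAt_sinh x).div (hasDerivAt_cosh x) (cosh_pos x).ne'
  rw [show sinh / cosh = tanh from funext fun y => (tanh_eq_sinh_div_cosh y).symm] at h
  refine h.congr_deriv ?_
  rw [tanh_eq_sinh_div_cosh, div_pow, one_sub_div (pow_ne_zero 2 (cosh_pos x).ne')]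
  ring

section Kink

variable (a b k : ℝ)

noncomputable def kinkProfile (z : ℝ) : ℝ := a + b * tanh (k * z)

theorem hasDerivAt_tanh_const_mul (z : ℝ) :
    HasDerivAt (fun z => tanh (k * z)) (k * (1 - tanh (k * z) ^ 2)) z :=
  ((hasDerivAt_tanh (k * z)).comp z ((hasDerivAt_id z).const_mul k)).congr_deriv (by ring)

theorem deriv_kinkProfile :
    deriv (kinkProfile a b k) = fun z => b * k * (1 - tanh (k * z) ^ 2) := by
  funext z
  refine (((hasDerivAt_tanh_const_mul k z).const_mul b).const_add a).deriv.trans ?_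
  ring

theorem deriv_one_sub_tanh_sq :
    deriv (fun z => 1 - tanh (k * z) ^ 2) =
      fun z => -2 * k * tanh (k * z) * (1 - tanh (k * z) ^ 2) := by
  funext z
  refine (((hasDerivAt_tanh_const_mul k z).pow 2).const_sub 1).deriv.trans ?_
  ring

theorem deriv_tanh_mul_one_sub_tanh_sq :
    deriv (fun z => tanh (k * z) * (1 - tanh (k * z) ^ 2)) =
      fun z => k * (1 - tanh (k * z) ^ 2) * (1 - 3 * tanh (k * z) ^ 2) := by
  funext z
  have h := hasDerivAt_tanh_const_mul k z
  refine (h.mul ((h.pow 2).const_sub 1)).deriv.trans ?_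
  simp only [Pi.pow_apply]
  ring

theorem iterate_deriv_three_kinkProfile (z : ℝ) :
    deriv^[3] (kinkProfile a b k) z =
      -2 * b * k ^ 3 * (1 - tanh (k * z) ^ 2) * (1 - 3 * tanh (k * z) ^ 2) := by
  simp only [Function.iterate_succ_apply, Function.iterate_zero_apply, deriv_kinkProfile,
    mul_assoc, deriv_const_mul_field', deriv_one_sub_tanh_sq, deriv_tanh_mul_one_sub_tanh_sq]
  ring

end Kink

theorem kinkProfile_reduced_mZK {c s : ℝ} (hs : s ^ 2 = 3 + 24 * c) (z : ℝ) :
    (c - kinkProfile (-1/4) (-(s/4)) (s/8) z - 2 * kinkProfile (-1/4) (-(s/4)) (s/8) z ^ 2)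
        * deriv (kinkProfile (-1/4) (-(s/4)) (s/8)) z
      + 4/3 * deriv^[3] (kinkProfile (-1/4) (-(s/4)) (s/8)) z = 0 := by
  rw [deriv_kinkProfile, iterate_deriv_three_kinkProfile, kinkProfile]
  linear_combination (1 - tanh (s / 8 * z) ^ 2) * s ^ 2 / 768 * hs

theorem iterate_deriv_comp_const_sub (n : ℕ) (f : ℝ → ℝ) (a x : ℝ) :
    deriv^[n] (fun x => f (a - x)) x = (-1) ^ n * deriv^[n] f (a - x) := by
  simpa [← iteratedDeriv_eq_iterate] using congrFun (iteratedDeriv_comp_const_sub n f a) x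

section TravelingWave

variable (f : ℝ → ℝ) (C c x y t : ℝ)

theorem deriv_travelingWave_time :
    deriv (fun t' => f (C - x - y + c * t')) t = c * deriv f (C - x - y + c * t) :=
  (deriv_comp_mul_left c (fun s => f (C - x - y + s)) t).trans
    (by rw [deriv_comp_const_add, smul_eq_mul])

theorem iterate_deriv_travelingWave_fst (n : ℕ) :
    deriv^[n] (fun x' => f (C - x' - y + c * t)) x =
      (-1) ^ n * deriv^[n] f (C - x - y + c * t) := by
  have phase (x' : ℝ) : C - x' - y + c * t = (C - y + c * t) - x' := by ring
  simp only [phase]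
  exact iterate_deriv_comp_const_sub n f _ x

theorem iterate_deriv_travelingWave_snd (n : ℕ) :
    deriv^[n] (fun y' => f (C - x - y' + c * t)) y =
      (-1) ^ n * deriv^[n] f (C - x - y + c * t) := by
  have phase (y' : ℝ) : C - x - y' + c * t = (C - x + c * t) - y' := by ring
  simp only [phase]
  exact iterate_deriv_comp_const_sub n f _ y

theorem iterate_deriv_snd_deriv_fst_travelingWave (n : ℕ) :
    deriv^[n] (fun y' => deriv (fun x' => f (C - x' - y' + c * t)) x) y =
      (-1) ^ (n + 1) * deriv^[n + 1] f (C - x - y + c * t) := by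
  have hx (y' : ℝ) := iterate_deriv_travelingWave_fst f C c x y' t 1
  simp only [Function.iterate_one] at hx
  simp only [hx]
  rw [← iteratedDeriv_eq_iterate, iteratedDeriv_const_mul_field, iteratedDeriv_eq_iterate,
    iterate_deriv_travelingWave_snd, Function.iterate_succ_apply]
  ring

theorem mZK_travelingWave :
    deriv (fun t' => f (C - x - y + c * t')) t
        + f (C - x - y + c * t) * deriv (fun x' => f (C - x' - y + c * t)) x
        + 2 * f (C - x - y + c * t) ^ 2 * deriv (fun x' => f (C - x' - y + c * t)) x
        - deriv^[3] (fun x' => f (C - x' - y + c * t)) x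
        - (1/3) * deriv^[2] (fun y' => deriv (fun x' => f (C - x' - y' + c * t)) x) y =
      (c - f (C - x - y + c * t) - 2 * f (C - x - y + c * t) ^ 2) * deriv f (C - x - y + c * t)
        + 4/3 * deriv^[3] f (C - x - y + c * t) := by
  have hx := iterate_deriv_travelingWave_fst f C c x y t 1
  simp only [Function.iterate_one] at hx
  rw [deriv_travelingWave_time, hx, iterate_deriv_travelingWave_fst,
    iterate_deriv_snd_deriv_fst_travelingWave]
  ring

end TravelingWave

/-- The kink traveling-wave solution of the mZK equation with
A = 1, B = 2, M = -1, N = -1/3. -/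
theorem stmt_13 (c C₁ : ℝ) (hc : -1/8 < c) (u : ℝ → ℝ → ℝ → ℝ)
    (hu : ∀ x y t : ℝ, u x y t = -1/4 - (Real.sqrt (3 + 24 * c) / 4) *
      Real.tanh ((Real.sqrt (3 + 24 * c) / 8) * (C₁ - x - y + c * t))) :
    ∀ x y t : ℝ,
      deriv (fun t' => u x y t') t
        + u x y t * deriv (fun x' => u x' y t) x
        + 2 * (u x y t) ^ 2 * deriv (fun x' => u x' y t) x
        - deriv^[3] (fun x' => u x' y t) x
        - (1/3) * deriv^[2] (fun y' => deriv (fun x' => u x' y' t) x) y = 0 := by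
  intro x y t
  set s := √(3 + 24 * c)
  have hs : s ^ 2 = 3 + 24 * c := sq_sqrt (by linarith)
  obtain rfl : u = fun x y t => kinkProfile (-1/4) (-(s/4)) (s/8) (C₁ - x - y + c * t) := by
    funext x y t
    rw [hu, kinkProfile]
    ring
  rw [mZK_travelingWave]
  exact kinkProfile_reduced_mZK hs _
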